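/- arXiv:0802.0297 — 2 statements merged into one kernel-verified Lean document; each statement's English description precedes it below -/
import Mathlib

section
/- Suppose u : ℝ → ℂ is a C³ function with u''' − v₁·u' absolutely continuous, solving (u''' − v₁ u')' + v₀ u = λ u on ℝ with v₀, v₁ real-valued and λ real. Define F_u(r) = (u'''(r) − v₁(r)u'(r))·conj(u(r)) − u''(r)·conj(u'(r)). Then Im F_u(r) = Im F_u(−r) for all r. -/
/-!
Differentiating `F_u = q ū - u'' ū'` with `q = u''' - v₁ u'` and using `q' = (λ - v₀) u` gives
`F_u' = (λ - v₀) |u|² - v₁ |u'|² - |u''|²`, which is real. Hence `Im F_u` is constant on `ℝ`.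
-/

open Complex ComplexConjugate

theorem ContDiff.hasDerivAt_iteratedDeriv {𝕜 F : Type*} [NontriviallyNormedField 𝕜]
    [NormedAddCommGroup F] [NormedSpace 𝕜 F] {n : WithTop ℕ∞} {f : 𝕜 → F} (hf : ContDiff 𝕜 n f)
    {k : ℕ} (hk : k < n) (x : 𝕜) :
    HasDerivAt (iteratedDeriv k f) (iteratedDeriv (k + 1) f x) x := by
  rw [iteratedDeriv_succ]
  exact (hf.differentiable_iteratedDeriv k hk x).hasDerivAt

theorem im_eq_of_forall_hasDerivAt_of_im_eq_zero {F F' : ℝ → ℂ} (hF : ∀ x, HasDerivAt F (F' x) x)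
    (hF' : ∀ x, (F' x).im = 0) (a b : ℝ) : (F a).im = (F b).im := by
  have him : ∀ x, HasDerivAt (fun t => (F t).im) 0 x := fun x => by
    have h : HasDerivAt (fun t => (F t).im) (F' x).im x :=
      imCLM.hasFDerivAt.comp_hasDerivAt x (hF x)
    rwa [hF'] at h
  exact is_const_of_deriv_eq_zero (fun x => (him x).differentiableAt) (fun x => (him x).deriv) a b

-- The `u''' * conj u'` terms cancel; what remains is `c |u|² - v |u'|² - |u''|²`.
theorem im_mul_conj_sub_mul_conj_eq_zero (u u' u'' u''' : ℂ) (c v : ℝ) :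
    ((c * u) * conj u + (u''' - v * u') * conj u' - (u''' * conj u' + u'' * conj u'')).im = 0 := by
  simp only [sub_im, add_im, mul_im, conj_re, conj_im, ofReal_re, ofReal_im, mul_re, sub_re]
  ring

/-- For a `C³` solution `u` of `(u''' - v₁ u')' + v₀ u = λ u` with real `v₀, v₁, λ`,
the quantity `Im F_u(r)` with
`F_u(r) = (u'''(r) - v₁(r) u'(r)) conj(u(r)) - u''(r) conj(u'(r))`
satisfies `Im F_u(r) = Im F_u(-r)` for all `r`. -/
theorem wronskian_imaginary_part_symmetric (u : ℝ → ℂ) (v₀ v₁ : ℝ → ℝ) (lam : ℝ)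
    (hu : ContDiff ℝ 3 u)
    (heq : ∀ x : ℝ,
      HasDerivAt (fun t => iteratedDeriv 3 u t - (v₁ t : ℂ) * deriv u t)
        ((lam : ℂ) * u x - (v₀ x : ℂ) * u x) x)
    (r : ℝ) :
    ((iteratedDeriv 3 u r - (v₁ r : ℂ) * deriv u r) * (starRingEnd ℂ) (u r) -
        iteratedDeriv 2 u r * (starRingEnd ℂ) (deriv u r)).im =
      ((iteratedDeriv 3 u (-r) - (v₁ (-r) : ℂ) * deriv u (-r)) * (starRingEnd ℂ) (u (-r)) -
        iteratedDeriv 2 u (-r) * (starRingEnd ℂ) (deriv u (-r))).im := by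
  have hu₁ (x : ℝ) : HasDerivAt u (deriv u x) x := by
    simpa using hu.hasDerivAt_iteratedDeriv (k := 0) (by norm_num) x
  have hu₂ (x : ℝ) : HasDerivAt (deriv u) (iteratedDeriv 2 u x) x := by
    simpa using hu.hasDerivAt_iteratedDeriv (k := 1) (by norm_num) x
  have hu₃ (x : ℝ) : HasDerivAt (iteratedDeriv 2 u) (iteratedDeriv 3 u x) x :=
    hu.hasDerivAt_iteratedDeriv (k := 2) (by norm_num) x
  refine im_eq_of_forall_hasDerivAt_of_im_eq_zero
    (fun x => ((heq x).mul (hu₁ x).star).sub ((hu₃ x).mul (hu₂ x).star)) (fun x => ?_) r (-r)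
  rw [← sub_mul]
  exact_mod_cast im_mul_conj_sub_mul_conj_eq_zero _ _ _ _ (lam - v₀ x) (v₁ x)
end

section
/- Let u ∈ C_c^∞((0,∞)). Then lim_{t→∓∞} ∫₀^∞ | ∫₀^∞ exp(±ikx − i k⁴ t) u(k) dk |² dx = 0 (with the sign of x-exponent opposite to the direction of time). -/
open Complex MeasureTheory Filter

open Set


private lemma norm_exp_osc (k x t : ℝ) :
    ‖Complex.exp (I * (k : ℂ) * (x : ℂ) - I * (k : ℂ) ^ 4 * (t : ℂ))‖ = 1 := by
  have h : I * (k : ℂ) * (x : ℂ) - I * (k : ℂ) ^ 4 * (t : ℂ)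
      = ((k * x - k ^ 4 * t : ℝ) : ℂ) * I := by push_cast; ring
  rw [h, Complex.norm_exp_ofReal_mul_I]

set_option maxHeartbeats 2000000 in
private lemma key_tendsto (u : ℝ → ℂ) (hu : ContDiff ℝ (⊤ : ℕ∞) u)
    (hsupp : HasCompactSupport u) (hpos : tsupport u ⊆ Set.Ioi (0 : ℝ)) :
    Tendsto (fun t : ℝ =>
        ∫ x in Set.Ioi (0 : ℝ),
          ‖∫ k in Set.Ioi (0 : ℝ),
              Complex.exp (I * (k : ℂ) * (x : ℂ) - I * (k : ℂ) ^ 4 * (t : ℂ)) * u k‖ ^ 2)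
      atBot (nhds 0) := by
  by_cases hne : tsupport u = ∅
  · have hz : ∀ k, u k = 0 := fun k =>
      image_eq_zero_of_notMem_tsupport (by simp [hne])
    simpa [hz] using (tendsto_const_nhds : Tendsto (fun _ : ℝ => (0:ℝ)) atBot (nhds 0))
  have hKc : IsCompact (tsupport u) := hsupp
  have hKne : (tsupport u).Nonempty := Set.nonempty_iff_ne_empty.2 hne
  obtain ⟨a, b, ha, hsub⟩ : ∃ a b : ℝ, 0 < a ∧ tsupport u ⊆ Set.Icc a b := by
    refine ⟨sInf (tsupport u), sSup (tsupport u), hpos (hKc.sInf_mem hKne), fun z hz => ?_⟩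
    exact ⟨csInf_le hKc.bddBelow hz, le_csSup hKc.bddAbove hz⟩
  have hab : a ≤ b := by
    obtain ⟨z, hz⟩ := hKne
    have := hsub hz; exact le_trans this.1 this.2
  set A : ℝ := a / 2 with hAdef
  set B : ℝ := b + 1 with hBdef
  have hA : 0 < A := by positivity
  have hAa : A < a := by simp only [hAdef]; linarith
  have hbB : b < B := by simp only [hBdef]; linarith
  have hAB : A < B := by linarith
  have uA : u A = 0 := image_eq_zero_of_notMem_tsupport fun h => absurd (hsub h).1 (not_le.2 hAa)
  have uB : u B = 0 := image_eq_zero_of_notMem_tsupport fun h => absurd (hsub h).2 (not_le.2 hbB)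
  have hcu : Continuous u := hu.continuous
  have hcu' : Continuous (deriv u) := hu.continuous_deriv (by simp)
  obtain ⟨M₀, hM₀⟩ := hsupp.exists_bound_of_continuous hcu
  obtain ⟨M₁, hM₁⟩ := (hsupp.deriv).exists_bound_of_continuous hcu'
  have hM₀0 : 0 ≤ M₀ := le_trans (norm_nonneg _) (hM₀ 0)
  have hM₁0 : 0 ≤ M₁ := le_trans (norm_nonneg _) (hM₁ 0)
  set c : ℝ := min 1 (4 * A ^ 3) with hcdef
  have hc : 0 < c := by positivity
  set Q : ℝ := M₁ + 3 * B ^ 2 * M₀ / A ^ 3 with hQdef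
  have hQ0 : 0 ≤ Q := by positivity
  set C : ℝ := (B - A) * (Q / c) with hCdef
  have hC0 : 0 ≤ C := by
    apply mul_nonneg (by linarith) (by positivity)
  clear_value A B c Q C
  -- key pointwise bound
  have key : ∀ t : ℝ, t ≤ -1 → ∀ x : ℝ, 0 ≤ x →
      ‖∫ k in Set.Ioi (0 : ℝ),
          Complex.exp (I * (k : ℂ) * (x : ℂ) - I * (k : ℂ) ^ 4 * (t : ℂ)) * u k‖
        ≤ C / (x - t) := by
    intro t ht x hx
    have hxt : (0:ℝ) < x - t := by linarith
    obtain ⟨D, hDdef⟩ : ∃ D : ℝ → ℝ, D = fun k => x - 4 * k ^ 3 * t := ⟨_, rfl⟩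
    have hDlb : ∀ k : ℝ, A ≤ k → x + 4 * A ^ 3 * (-t) ≤ D k := by
      intro k hk
      have hk3 : A ^ 3 ≤ k ^ 3 := pow_le_pow_left₀ hA.le hk 3
      have h4 := mul_le_mul_of_nonneg_right hk3 (by linarith : (0:ℝ) ≤ -t)
      simp only [hDdef]
      nlinarith
    have hDpos : ∀ k : ℝ, A ≤ k → 0 < D k := by
      intro k hk
      have h1 := hDlb k hk
      nlinarith [pow_pos hA 3]
    have hDc : ∀ k : ℝ, A ≤ k → c * (x - t) ≤ D k := by
      intro k hk
      have h1 := hDlb k hk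
      have hc1 : c ≤ 1 := by rw [hcdef]; exact min_le_left _ _
      have hc2 : c ≤ 4 * A ^ 3 := by rw [hcdef]; exact min_le_right _ _
      nlinarith
    have hDlb' : ∀ k : ℝ, A ≤ k → 4 * A ^ 3 * (-t) ≤ D k := by
      intro k hk
      have := hDlb k hk; linarith
    have hIne : ∀ k : ℝ, A ≤ k → (I * ((D k : ℝ) : ℂ)) ≠ 0 := fun k hk =>
      mul_ne_zero I_ne_zero (ofReal_ne_zero.2 (ne_of_gt (hDpos k hk)))
    obtain ⟨e, hedef⟩ : ∃ e : ℝ → ℂ, e = fun k : ℝ =>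
      Complex.exp (I * (k : ℂ) * (x : ℂ) - I * (k : ℂ) ^ 4 * (t : ℂ)) := ⟨_, rfl⟩
    obtain ⟨G', hG'def⟩ : ∃ G' : ℝ → ℂ, G' = fun k : ℝ =>
      (deriv u k * (I * ((D k : ℝ) : ℂ)) - u k * (I * ((-(12 * k ^ 2 * t) : ℝ) : ℂ)))
        / (I * ((D k : ℝ) : ℂ)) ^ 2 := ⟨_, rfl⟩
    -- derivative of the antiderivative
    have hder : ∀ k ∈ Set.uIcc A B,
        HasDerivAt (fun k : ℝ => e k * (u k / (I * ((D k : ℝ) : ℂ))))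
          (e k * u k + e k * G' k) k := by
      intro k hk
      rw [Set.uIcc_of_le hAB.le] at hk
      have hkA : A ≤ k := hk.1
      have h1 : HasDerivAt (fun k : ℝ => (k : ℂ)) 1 k := (hasDerivAt_id k).ofReal_comp
      have hφ : HasDerivAt
          (fun k : ℝ => I * (k : ℂ) * (x : ℂ) - I * (k : ℂ) ^ 4 * (t : ℂ))
          (I * ((D k : ℝ) : ℂ)) k := by
        have hp : HasDerivAt (fun k : ℝ => k * x - k ^ 4 * t) (D k) k := by
          have h2 := ((hasDerivAt_id k).mul_const x).sub ((hasDerivAt_pow 4 k).mul_const t)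
          refine h2.congr_deriv ?_
          simp only [hDdef]
          push_cast
          ring
        have h2 := (hp.ofReal_comp).mul_const I
        have hfe : (fun k : ℝ => I * (k : ℂ) * (x : ℂ) - I * (k : ℂ) ^ 4 * (t : ℂ))
            = fun k : ℝ => ((k * x - k ^ 4 * t : ℝ) : ℂ) * I := by
          funext k; push_cast; ring
        rw [hfe]
        refine h2.congr_deriv ?_
        ring
      have he : HasDerivAt e (e k * (I * ((D k : ℝ) : ℂ))) k := by
        rw [hedef]; exact hφ.cexp
      have hDre : HasDerivAt D (-(12 * k ^ 2 * t)) k := by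
        have h3 := ((hasDerivAt_pow 3 k).const_mul (4:ℝ)).mul_const t
        have h4 := (hasDerivAt_const k x).sub h3
        rw [hDdef]
        refine h4.congr_deriv ?_
        push_cast
        ring
      have hd : HasDerivAt (fun k : ℝ => I * ((D k : ℝ) : ℂ))
          (I * ((-(12 * k ^ 2 * t) : ℝ) : ℂ)) k := (hDre.ofReal_comp).const_mul I
      have hu' : HasDerivAt u (deriv u k) k :=
        ((hu.differentiable (by simp)) k).hasDerivAt
      have hg : HasDerivAt (fun k : ℝ => u k / (I * ((D k : ℝ) : ℂ))) (G' k) k := by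
        rw [hG'def]; exact hu'.div hd (hIne k hkA)
      have hF := he.mul hg
      refine hF.congr_deriv ?_
      have hne0 := hIne k hkA
      have hD0 : ((D k : ℝ) : ℂ) ≠ 0 := ofReal_ne_zero.2 (ne_of_gt (hDpos k hkA))
      field_simp
    -- continuity facts
    have hcontD : Continuous D := by simp only [hDdef]; fun_prop
    have hconte : Continuous e := by simp only [hedef]; fun_prop
    have hcontG' : ContinuousOn G' (Set.uIcc A B) := by
      rw [Set.uIcc_of_le hAB.le, hG'def]
      apply ContinuousOn.div
      · apply ContinuousOn.sub
        · exact (hcu'.mul (by fun_prop)).continuousOn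
        · exact (hcu.mul (by fun_prop)).continuousOn
      · fun_prop
      · intro k hk
        exact pow_ne_zero 2 (hIne k hk.1)
    have hf_ii : IntervalIntegrable (fun k => e k * u k) volume A B :=
      (hconte.mul hcu).intervalIntegrable A B
    have heg_ii : IntervalIntegrable (fun k => e k * G' k) volume A B :=
      (hconte.continuousOn.mul hcontG').intervalIntegrable
    have hsum_ii : IntervalIntegrable (fun k => e k * u k + e k * G' k) volume A B :=
      hf_ii.add heg_ii
    have hIBP : ∫ k in A..B, (e k * u k + e k * G' k) = 0 := by
      rw [intervalIntegral.integral_eq_sub_of_hasDerivAt hder hsum_ii]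
      simp [uA, uB]
    have hsplit : ∫ k in A..B, e k * u k = - ∫ k in A..B, e k * G' k := by
      have := intervalIntegral.integral_add hf_ii heg_ii
      rw [hIBP] at this
      linear_combination -this
    -- support of the integrand
    have hsupf : Function.support (fun k => e k * u k) ⊆ Set.Ioc A B := by
      intro k hk
      have hku : u k ≠ 0 := by
        intro h; apply hk; simp [h]
      have hkt : k ∈ tsupport u := subset_tsupport u hku
      have := hsub hkt
      exact ⟨lt_of_lt_of_le hAa this.1, le_trans this.2 hbB.le⟩
    have hstep1 : (∫ k in Set.Ioi (0 : ℝ),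
        Complex.exp (I * (k : ℂ) * (x : ℂ) - I * (k : ℂ) ^ 4 * (t : ℂ)) * u k)
        = ∫ k in A..B, e k * u k := by
      simp only [hedef]
      rw [hedef] at hsupf
      rw [intervalIntegral.integral_eq_integral_of_support_subset hsupf]
      apply setIntegral_eq_integral_of_forall_compl_eq_zero
      intro k hk
      simp only [Set.mem_Ioi, not_lt] at hk
      by_contra h
      have : k ∈ Set.Ioc A B := hsupf h
      linarith [this.1]
    -- pointwise bound on the boundary term integrand
    have hpt : ∀ k ∈ Set.uIoc A B, ‖e k * G' k‖ ≤ (Q / c) / (x - t) := by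
      clear hder hIBP hsplit hstep1 hsupf heg_ii hf_ii hsum_ii hcontG' hconte hcontD
      intro k hk
      rw [Set.uIoc_of_le hAB.le] at hk
      have hkA : A ≤ k := hk.1.le
      have hk0 : 0 ≤ k := le_trans hA.le hkA
      have hkB : k ≤ B := hk.2
      have hDk := hDpos k hkA
      have hnormI : ‖(I * ((D k : ℝ) : ℂ))‖ = D k := by
        rw [norm_mul, Complex.norm_I, one_mul, Complex.norm_real,
          Real.norm_eq_abs, _root_.abs_of_pos hDk]
      have hnorm2 : ‖(I * ((D k : ℝ) : ℂ)) ^ 2‖ = (D k) ^ 2 := by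
        rw [norm_pow, hnormI]
      have hnorm12 : ‖(I * ((-(12 * k ^ 2 * t) : ℝ) : ℂ))‖ = 12 * k ^ 2 * (-t) := by
        rw [norm_mul, Complex.norm_I, one_mul, Complex.norm_real, Real.norm_eq_abs,
          _root_.abs_of_nonneg (by nlinarith : (0:ℝ) ≤ -(12 * k ^ 2 * t))]
        ring
      have hnum : ‖deriv u k * (I * ((D k : ℝ) : ℂ))
          - u k * (I * ((-(12 * k ^ 2 * t) : ℝ) : ℂ))‖ ≤ Q * D k := by
        have h1 : ‖deriv u k * (I * ((D k : ℝ) : ℂ))‖ ≤ M₁ * D k := by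
          rw [norm_mul, hnormI]
          exact mul_le_mul_of_nonneg_right (hM₁ k) hDk.le
        have h2 : ‖u k * (I * ((-(12 * k ^ 2 * t) : ℝ) : ℂ))‖ ≤ M₀ * (12 * B ^ 2 * (-t)) := by
          rw [norm_mul, hnorm12]
          have hk2 : k ^ 2 ≤ B ^ 2 := pow_le_pow_left₀ hk0 hkB 2
          have : 12 * k ^ 2 * (-t) ≤ 12 * B ^ 2 * (-t) := by nlinarith
          exact mul_le_mul (hM₀ k) this (by nlinarith) hM₀0
        have h3 : M₀ * (12 * B ^ 2 * (-t)) ≤ (3 * B ^ 2 * M₀ / A ^ 3) * D k := by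
          have h4 := hDlb' k hkA
          have h5 : 0 ≤ 3 * B ^ 2 * M₀ / A ^ 3 := by positivity
          have h6 := mul_le_mul_of_nonneg_left h4 h5
          have h7 : (3 * B ^ 2 * M₀ / A ^ 3) * (4 * A ^ 3 * (-t)) = M₀ * (12 * B ^ 2 * (-t)) := by
            field_simp
            ring
          linarith
        calc ‖deriv u k * (I * ((D k : ℝ) : ℂ))
            - u k * (I * ((-(12 * k ^ 2 * t) : ℝ) : ℂ))‖
            ≤ M₁ * D k + M₀ * (12 * B ^ 2 * (-t)) := by
              refine le_trans (norm_sub_le _ _) (add_le_add h1 h2)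
          _ ≤ M₁ * D k + (3 * B ^ 2 * M₀ / A ^ 3) * D k := by linarith
          _ = Q * D k := by rw [hQdef]; ring
      have hee : ‖e k‖ = 1 := by rw [hedef]; exact norm_exp_osc k x t
      calc ‖e k * G' k‖ = ‖G' k‖ := by rw [norm_mul, hee, one_mul]
        _ = ‖deriv u k * (I * ((D k : ℝ) : ℂ))
            - u k * (I * ((-(12 * k ^ 2 * t) : ℝ) : ℂ))‖ / (D k) ^ 2 := by
            rw [hG'def, norm_div, hnorm2]
        _ ≤ (Q * D k) / (D k) ^ 2 := by gcongr
        _ = Q / D k := by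
            rw [eq_div_iff (ne_of_gt hDk)]
            field_simp
        _ ≤ Q / (c * (x - t)) := by
            have h9 := hDc k hkA
            gcongr
        _ = (Q / c) / (x - t) := by rw [div_div]
    -- assemble
    rw [hstep1, hsplit, norm_neg]
    calc ‖∫ k in A..B, e k * G' k‖ ≤ (Q / c) / (x - t) * |B - A| :=
          intervalIntegral.norm_integral_le_of_norm_le_const hpt
      _ = C / (x - t) := by
          rw [abs_of_pos (by linarith : (0:ℝ) < B - A), hCdef]
          ring
  -- outer bound
  have outer : ∀ t : ℝ, t ≤ -1 →
      (∫ x in Set.Ioi (0 : ℝ),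
          ‖∫ k in Set.Ioi (0 : ℝ),
              Complex.exp (I * (k : ℂ) * (x : ℂ) - I * (k : ℂ) ^ 4 * (t : ℂ)) * u k‖ ^ 2)
        ≤ C ^ 2 * (-t)⁻¹ := by
    intro t ht
    have hxt : ∀ x : ℝ, 0 ≤ x → 0 < x - t := fun x hx => by linarith
    have hderiv : ∀ x ∈ Set.Ici (0:ℝ),
        HasDerivAt (fun x : ℝ => -C ^ 2 * (x - t)⁻¹) (C ^ 2 * ((x - t) ^ 2)⁻¹) x := by
      intro x hx
      have h1 : HasDerivAt (fun x : ℝ => x - t) 1 x := (hasDerivAt_id x).sub_const t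
      have h2 := (h1.inv (ne_of_gt (hxt x hx))).const_mul (-C ^ 2)
      refine h2.congr_deriv ?_
      field_simp
    have hlim : Tendsto (fun x : ℝ => -C ^ 2 * (x - t)⁻¹) atTop (nhds 0) := by
      have h1 : Tendsto (fun x : ℝ => x - t) atTop atTop :=
        tendsto_atTop_add_const_right atTop (-t) tendsto_id
      simpa using h1.inv_tendsto_atTop.const_mul (-C ^ 2)
    have g'pos : ∀ x ∈ Set.Ioi (0:ℝ), 0 ≤ C ^ 2 * ((x - t) ^ 2)⁻¹ := fun x _ => by positivity
    have hint : IntegrableOn (fun x : ℝ => C ^ 2 * ((x - t) ^ 2)⁻¹) (Set.Ioi 0) :=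
      integrableOn_Ioi_deriv_of_nonneg' hderiv g'pos hlim
    have hval : ∫ x in Set.Ioi (0:ℝ), C ^ 2 * ((x - t) ^ 2)⁻¹ = C ^ 2 * (-t)⁻¹ := by
      rw [integral_Ioi_of_hasDerivAt_of_nonneg' hderiv g'pos hlim]
      ring_nf
    rw [← hval]
    refine integral_mono_of_nonneg (Eventually.of_forall fun x => by positivity) hint ?_
    filter_upwards [ae_restrict_mem measurableSet_Ioi] with x hx
    have hb := key t ht x (le_of_lt hx)
    have h2 : ‖∫ k in Set.Ioi (0 : ℝ),
        Complex.exp (I * (k : ℂ) * (x : ℂ) - I * (k : ℂ) ^ 4 * (t : ℂ)) * u k‖ ^ 2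
        ≤ (C / (x - t)) ^ 2 := by
      apply pow_le_pow_left₀ (norm_nonneg _) hb
    calc _ ≤ (C / (x - t)) ^ 2 := h2
      _ = C ^ 2 * ((x - t) ^ 2)⁻¹ := by rw [div_pow, div_eq_mul_inv]
  -- squeeze
  refine squeeze_zero' (g := fun t : ℝ => C ^ 2 * (-t)⁻¹) (Eventually.of_forall fun t => ?_) ?_ ?_
  · exact integral_nonneg fun x => by positivity
  · filter_upwards [eventually_le_atBot (-1 : ℝ)] with t ht using outer t ht
  · have h1 : Tendsto (fun t : ℝ => (-t)⁻¹) atBot (nhds 0) :=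
      tendsto_inv_atTop_zero.comp tendsto_neg_atBot_atTop
    simpa using h1.const_mul (C ^ 2)

/-- For the free fourth-order evolution, the wave packet
`∫₀^∞ e^{±ikx - ik⁴t} u(k) dk` restricted to `x > 0` tends to `0` in `L²(ℝ₊)`
as `t → ∓∞` (the sign in the `x`-exponent opposite to the direction of time),
for `u ∈ C_c^∞((0,∞))`. -/
theorem oscillating_mode_dispersion (u : ℝ → ℂ) (hu : ContDiff ℝ (⊤ : ℕ∞) u)
    (hsupp : HasCompactSupport u) (hpos : tsupport u ⊆ Set.Ioi (0 : ℝ)) :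
    Tendsto (fun t : ℝ =>
        ∫ x in Set.Ioi (0 : ℝ),
          ‖∫ k in Set.Ioi (0 : ℝ),
              Complex.exp (I * (k : ℂ) * (x : ℂ) - I * (k : ℂ) ^ 4 * (t : ℂ)) * u k‖ ^ 2)
      atBot (nhds 0) ∧
    Tendsto (fun t : ℝ =>
        ∫ x in Set.Ioi (0 : ℝ),
          ‖∫ k in Set.Ioi (0 : ℝ),
              Complex.exp (-(I * (k : ℂ) * (x : ℂ)) - I * (k : ℂ) ^ 4 * (t : ℂ)) * u k‖ ^ 2)
      atTop (nhds 0) := by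
  constructor
  · exact key_tendsto u hu hsupp hpos
  · have hconj : ContDiff ℝ (⊤ : ℕ∞) (fun k => (starRingEnd ℂ) (u k)) :=
      Complex.conjCLE.contDiff.comp hu
    have hsupp' : HasCompactSupport (fun k => (starRingEnd ℂ) (u k)) :=
      hsupp.comp_left (map_zero _)
    have hts : tsupport (fun k => (starRingEnd ℂ) (u k)) ⊆ Set.Ioi (0 : ℝ) := by
      refine subset_trans (closure_mono ?_) hpos
      intro k hk
      simp only [Function.mem_support] at hk ⊢
      intro h
      exact hk (by simp [h])
    have h2 := (key_tendsto _ hconj hsupp' hts).comp tendsto_neg_atTop_atBot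
    apply h2.congr
    intro t
    show (∫ x in Set.Ioi (0 : ℝ),
        ‖∫ k in Set.Ioi (0 : ℝ),
            Complex.exp (I * (k : ℂ) * (x : ℂ) - I * (k : ℂ) ^ 4 * (((-t : ℝ)) : ℂ))
              * (starRingEnd ℂ) (u k)‖ ^ 2) = _
    apply setIntegral_congr_fun measurableSet_Ioi
    intro x _
    have hinner : (∫ k in Set.Ioi (0 : ℝ),
          Complex.exp (I * (k : ℂ) * (x : ℂ) - I * (k : ℂ) ^ 4 * (((-t : ℝ)) : ℂ))
            * (starRingEnd ℂ) (u k))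
        = (starRingEnd ℂ) (∫ k in Set.Ioi (0 : ℝ),
            Complex.exp (-(I * (k : ℂ) * (x : ℂ)) - I * (k : ℂ) ^ 4 * (t : ℂ)) * u k) := by
      rw [← integral_conj]
      apply setIntegral_congr_fun measurableSet_Ioi
      intro k _
      dsimp only
      rw [map_mul, ← Complex.exp_conj]
      congr 1
      simp only [map_sub, map_neg, map_mul, Complex.conj_I, Complex.conj_ofReal, map_pow]
      push_cast
      ring
    dsimp only
    rw [hinner, RCLike.norm_conj]
end
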